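/- arXiv:2306.08254 — 3 statements merged into one kernel-verified Lean document; each statement's English description precedes it below -/
import Mathlib

section
/- Let R > 0 and define 𝔏(R) := {z ∈ ℂ : max(|Re(1/z)|, |Im(1/z)|) = 1/(2R)} (for z ≠ 0). Then the distance between the sets 𝔏(R) and 𝔏(2R) equals (√5 − 1)·R. -/
/-!
For `r > 0`, `z ∈ 𝔏(r)` iff `‖z‖² = 2r·max(|Re z|, |Im z|)`. Choosing the centre `c ∈ {±r, ±ir}`
on the axis of the larger coordinate of `z` makes `⟪z, c⟫ = r·max(|Re z|, |Im z|)`, so `z` lies on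
the circle `C(c, r)`. For `w ∈ 𝔏(2R)` the bound `‖w‖² ≤ 2·max(|Re w|, |Im w|)²` forces
`‖w‖² ≥ 8R²`, and for every axis point `c` of modulus `R` we get
`‖w - c‖² ≥ ‖w‖² - 2R·max(|Re w|, |Im w|) + R² = ‖w‖²/2 + R² ≥ 5R²`.
So all distances are at least `√5 R - R`, with equality for `w = 2R(1 + i)`.
-/

open Complex
open scoped InnerProductSpace

-- The set `𝔏(r)`: the preimage under `z ↦ 1/z` of the sup-norm sphere of radius `1/(2r)`.
def invSupSphere (r : ℝ) : Set ℂ :=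
  {z | z ≠ 0 ∧ max |(1 / z).re| |(1 / z).im| = 1 / (2 * r)}

def IsAxisPoint (r : ℝ) (c : ℂ) : Prop :=
  (c.re = 0 ∨ c.im = 0) ∧ ‖c‖ = r

lemma real_inner_eq_re_mul_re_add_im_mul_im (w z : ℂ) :
    ⟪w, z⟫_ℝ = w.re * z.re + w.im * z.im := by
  rw [Complex.inner]; simp only [mul_re, conj_re, conj_im]; ring

lemma sq_norm_le_two_mul_sq_max (z : ℂ) : ‖z‖ ^ 2 ≤ 2 * max |z.re| |z.im| ^ 2 := by
  rw [Complex.sq_norm, normSq_apply]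
  nlinarith [sq_abs z.re, sq_abs z.im, abs_nonneg z.re, abs_nonneg z.im,
    le_max_left |z.re| |z.im|, le_max_right |z.re| |z.im|]

lemma mem_invSupSphere_iff {r : ℝ} (hr : r ≠ 0) {z : ℂ} :
    z ∈ invSupSphere r ↔ z ≠ 0 ∧ ‖z‖ ^ 2 = 2 * r * max |z.re| |z.im| := by
  refine and_congr_right fun hz => ?_
  have hn : 0 < normSq z := normSq_pos.mpr hz
  rw [one_div, inv_re, inv_im, neg_div, abs_neg, abs_div, abs_div, abs_of_pos hn,
    max_div_div_right hn.le, div_eq_div_iff hn.ne' (mul_ne_zero two_ne_zero hr), Complex.sq_norm]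
  constructor <;> intro h <;> linarith

lemma IsAxisPoint.inner_le {r : ℝ} {c : ℂ} (hc : IsAxisPoint r c) (w : ℂ) :
    ⟪w, c⟫_ℝ ≤ r * max |w.re| |w.im| := by
  obtain ⟨hc | hc, rfl⟩ := hc
  · calc ⟪w, c⟫_ℝ = w.im * c.im := by rw [real_inner_eq_re_mul_re_add_im_mul_im, hc]; ring
      _ ≤ |w.im| * |c.im| := by rw [← abs_mul]; exact le_abs_self _
      _ ≤ ‖c‖ * max |w.re| |w.im| := by
        rw [mul_comm]; gcongr
        exacts [abs_im_le_norm c, le_max_right _ _]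
  · calc ⟪w, c⟫_ℝ = w.re * c.re := by rw [real_inner_eq_re_mul_re_add_im_mul_im, hc]; ring
      _ ≤ |w.re| * |c.re| := by rw [← abs_mul]; exact le_abs_self _
      _ ≤ ‖c‖ * max |w.re| |w.im| := by
        rw [mul_comm]; gcongr
        exacts [abs_re_le_norm c, le_max_left _ _]

lemma exists_isAxisPoint_inner_eq {r : ℝ} (hr : 0 ≤ r) (w : ℂ) :
    ∃ c, IsAxisPoint r c ∧ ⟪w, c⟫_ℝ = r * max |w.re| |w.im| := by
  simp only [IsAxisPoint, real_inner_eq_re_mul_re_add_im_mul_im]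
  rcases le_total |w.im| |w.re| with h | h
  · rw [max_eq_left h]
    rcases abs_cases w.re with ⟨hw, -⟩ | ⟨hw, -⟩
    · exact ⟨r, by simp [abs_of_nonneg hr], by simp [hw, mul_comm]⟩
    · exact ⟨-r, by simp [abs_of_nonneg hr], by simp [hw, mul_comm]⟩
  · rw [max_eq_right h]
    rcases abs_cases w.im with ⟨hw, -⟩ | ⟨hw, -⟩
    · exact ⟨r * I, by simp [abs_of_nonneg hr], by simp [hw, mul_comm]⟩
    · exact ⟨-(r * I), by simp [abs_of_nonneg hr], by simp [hw, mul_comm]⟩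

lemma exists_isAxisPoint_norm_sub_eq {r : ℝ} (hr : 0 < r) {z : ℂ} (hz : z ∈ invSupSphere r) :
    ∃ c, IsAxisPoint r c ∧ ‖z - c‖ = r := by
  obtain ⟨-, hz⟩ := (mem_invSupSphere_iff hr.ne').1 hz
  obtain ⟨c, hc, hzc⟩ := exists_isAxisPoint_inner_eq hr.le z
  refine ⟨c, hc, (pow_left_inj₀ (norm_nonneg _) hr.le two_ne_zero).1 ?_⟩
  rw [norm_sub_sq_real, hc.2, hzc, hz]
  ring

lemma sqrt_five_mul_le_norm_sub {R : ℝ} (hR : 0 < R) {w c : ℂ} (hw : w ∈ invSupSphere (2 * R))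
    (hc : IsAxisPoint R c) : √5 * R ≤ ‖w - c‖ := by
  obtain ⟨hw0, hw⟩ := (mem_invSupSphere_iff (by positivity)).1 hw
  set M := max |w.re| |w.im|
  have hM : 2 * R ≤ M := by
    have hle := sq_norm_le_two_mul_sq_max w
    have hpos : 0 < ‖w‖ ^ 2 := by positivity
    have hMpos : 0 < M := by nlinarith
    nlinarith
  have h5 : 5 * R ^ 2 ≤ ‖w - c‖ ^ 2 := by
    rw [norm_sub_sq_real, hc.2]
    nlinarith [hc.inner_le w]
  calc √5 * R = √(5 * R ^ 2) := by rw [Real.sqrt_mul (by norm_num), Real.sqrt_sq hR.le]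
    _ ≤ √(‖w - c‖ ^ 2) := Real.sqrt_le_sqrt h5
    _ = ‖w - c‖ := Real.sqrt_sq (norm_nonneg _)

lemma sqrt_five_sub_one_mul_le_norm_sub {R : ℝ} (hR : 0 < R) {z w : ℂ} (hz : z ∈ invSupSphere R)
    (hw : w ∈ invSupSphere (2 * R)) : (√5 - 1) * R ≤ ‖z - w‖ := by
  obtain ⟨c, hc, hzc⟩ := exists_isAxisPoint_norm_sub_eq hR hz
  have hwc := sqrt_five_mul_le_norm_sub hR hw hc
  have htri := norm_sub_le_norm_sub_add_norm_sub w z c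
  rw [norm_sub_rev w z] at htri
  linarith

-- The first witness is the point of the circle `C(R, R)` on the segment from its centre `R` to
-- the second witness `2R(1 + i)`.
lemma exists_norm_sub_eq_sqrt_five_sub_one_mul {R : ℝ} (hR : 0 < R) :
    ∃ z ∈ invSupSphere R, ∃ w ∈ invSupSphere (2 * R), ‖z - w‖ = (√5 - 1) * R := by
  have h5 : √5 ^ 2 = 5 := Real.sq_sqrt (by norm_num)
  have h5pos : 0 < √5 := by positivity
  have h5le : √5 ≤ 5 := by nlinarith
  refine ⟨⟨R + R * √5 / 5, 2 * R * √5 / 5⟩, ?_, ⟨2 * R, 2 * R⟩, ?_, ?_⟩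
  · refine (mem_invSupSphere_iff hR.ne').2 ⟨fun h => ?_, ?_⟩
    · have := congrArg re h
      simp only [zero_re] at this
      nlinarith [mul_pos hR h5pos]
    · rw [Complex.sq_norm, normSq_mk, abs_of_pos (by positivity), abs_of_pos (by positivity),
        max_eq_left (by nlinarith)]
      linear_combination (R ^ 2 / 5) * h5
  · refine (mem_invSupSphere_iff (by positivity)).2 ⟨fun h => ?_, ?_⟩
    · have := congrArg re h
      simp only [zero_re] at this
      linarith
    · rw [Complex.sq_norm, normSq_mk, abs_of_pos (by positivity), max_self]
      ring
  · rw [← abs_of_pos (by nlinarith : 0 < (√5 - 1) * R), ← Real.sqrt_sq_eq_abs, Complex.norm_def]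
    congr 1
    simp only [normSq_apply, sub_re, sub_im]
    linear_combination (-(4 * R ^ 2 / 5)) * h5

/-- With `𝔏(R) = {z ≠ 0 : max (|Re (1/z)|) (|Im (1/z)|) = 1/(2R)}`, the distance
between `𝔏(R)` and `𝔏(2R)` equals `(√5 - 1) R`. -/
theorem stmt7 (R : ℝ) (hR : 0 < R) :
    sInf (Set.image2 (fun a b : ℂ => ‖a - b‖)
        {z : ℂ | z ≠ 0 ∧ max |(1 / z).re| |(1 / z).im| = 1 / (2 * R)}
        {z : ℂ | z ≠ 0 ∧ max |(1 / z).re| |(1 / z).im| = 1 / (2 * (2 * R))}) =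
      (Real.sqrt 5 - 1) * R := by
  refine IsLeast.csInf_eq ⟨exists_norm_sub_eq_sqrt_five_sub_one_mul hR, ?_⟩
  rintro _ ⟨z, hz, w, hw, rfl⟩
  exact sqrt_five_sub_one_mul_le_norm_sub hR hz hw
end

section
/- Let n ≥ 1, let a_1,…,a_n be Gaussian integers, let q_n, q_{n-1} be the corresponding continuants with |q_{n-1}/q_n| ≤ 1, and let Q(z) = (z·p_{n-1} + p_n)/(z·q_{n-1} + q_n) denote the associated Möbius map satisfying Q(α) − Q(β) = (−1)^n (α−β)/(q_n^2 (1 + (q_{n-1}/q_n)α)(1 + (q_{n-1}/q_n)β)). If α, β ∈ ℂ satisfy |α| ≤ 2R and |β| ≤ 4R with 0 < R < 1/4, then |α − β| / ((1+2R)(1+4R)|q_n|^2) ≤ |Q(α) − Q(β)| ≤ |α − β| / ((1−2R)(1−4R)|q_n|^2). -/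
/-! Taking norms in the identity for `Q α - Q β` leaves `‖α - β‖ / (‖q_n‖² ‖1 + r α‖ ‖1 + r β‖)`
with `r = q_{n-1}/q_n`; since `‖r‖ ≤ 1`, each factor `‖1 + r z‖` lies between `1 - ‖z‖`
and `1 + ‖z‖`. -/

theorem norm_one_add_mul_mem_Icc {𝕜 : Type*} [SeminormedRing 𝕜] [NormOneClass 𝕜] {r z : 𝕜}
    {s : ℝ} (hr : ‖r‖ ≤ 1) (hz : ‖z‖ ≤ s) :
    ‖1 + r * z‖ ∈ Set.Icc (1 - s) (1 + s) := by
  have hrz : ‖r * z‖ ≤ s :=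
    (norm_mul_le r z).trans (by nlinarith [norm_nonneg r, norm_nonneg z])
  constructor
  · have h := norm_sub_norm_le (1 : 𝕜) (-(r * z))
    rw [sub_neg_eq_add, norm_one, norm_neg] at h
    linarith
  · linarith [norm_add_le (1 : 𝕜) (r * z), norm_one (α := 𝕜)]

theorem stmt9_general (n : ℕ) (qn qn' : ℂ) (hqn : qn ≠ 0)
    (hratio : ‖qn' / qn‖ ≤ 1)
    (Q : ℂ → ℂ)
    (hQ : ∀ α β : ℂ, Q α - Q β =
      (-1) ^ n * (α - β) / (qn ^ 2 * (1 + (qn' / qn) * α) * (1 + (qn' / qn) * β)))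
    (R : ℝ) (hR : R < 1 / 4) (α β : ℂ)
    (hα : ‖α‖ ≤ 2 * R) (hβ : ‖β‖ ≤ 4 * R) :
    ‖α - β‖ / ((1 + 2 * R) * (1 + 4 * R) * (‖qn‖) ^ 2) ≤
        ‖Q α - Q β‖ ∧
      ‖Q α - Q β‖ ≤
        ‖α - β‖ / ((1 - 2 * R) * (1 - 4 * R) * (‖qn‖) ^ 2) := by
  set A := ‖1 + qn' / qn * α‖
  set B := ‖1 + qn' / qn * β‖
  obtain ⟨hA₁, hA₂⟩ : 1 - 2 * R ≤ A ∧ A ≤ 1 + 2 * R := norm_one_add_mul_mem_Icc hratio hα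
  obtain ⟨hB₁, hB₂⟩ : 1 - 4 * R ≤ B ∧ B ≤ 1 + 4 * R := norm_one_add_mul_mem_Icc hratio hβ
  have hnorm : ‖Q α - Q β‖ = ‖α - β‖ / (A * B * ‖qn‖ ^ 2) := by
    simp only [hQ, norm_div, norm_mul, norm_pow, norm_neg, norm_one, one_pow, one_mul, A, B]
    ring
  have hR0 : 0 ≤ R := by linarith [norm_nonneg α]
  have h2R : 0 < 1 - 2 * R := by linarith
  have h4R : 0 < 1 - 4 * R := by linarith
  have hq : 0 < ‖qn‖ := norm_pos_iff.mpr hqn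
  have hA : 0 < A := h2R.trans_le hA₁
  have hB : 0 < B := h4R.trans_le hB₁
  rw [hnorm]
  constructor <;> gcongr

/-- Distortion estimate for the Möbius map associated to continuants: if
`|q_{n-1}/q_n| ≤ 1` and `Q α - Q β = (-1)^n (α - β)/(q_n² (1 + (q_{n-1}/q_n)α)(1 + (q_{n-1}/q_n)β))`,
then for `|α| ≤ 2R`, `|β| ≤ 4R`, `0 < R < 1/4`,
`|α - β|/((1+2R)(1+4R)|q_n|²) ≤ |Q α - Q β| ≤ |α - β|/((1-2R)(1-4R)|q_n|²)`. -/
theorem stmt9 (n : ℕ) (hn : 1 ≤ n) (qn qn' : ℂ) (hqn : qn ≠ 0)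
    (hratio : ‖qn' / qn‖ ≤ 1)
    (Q : ℂ → ℂ)
    (hQ : ∀ α β : ℂ, Q α - Q β =
      (-1) ^ n * (α - β) / (qn ^ 2 * (1 + (qn' / qn) * α) * (1 + (qn' / qn) * β)))
    (R : ℝ) (hR0 : 0 < R) (hR : R < 1 / 4) (α β : ℂ)
    (hα : ‖α‖ ≤ 2 * R) (hβ : ‖β‖ ≤ 4 * R) :
    ‖α - β‖ / ((1 + 2 * R) * (1 + 4 * R) * (‖qn‖) ^ 2) ≤
        ‖Q α - Q β‖ ∧
      ‖Q α - Q β‖ ≤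
        ‖α - β‖ / ((1 - 2 * R) * (1 - 4 * R) * (‖qn‖) ^ 2) :=
  stmt9_general n qn qn' hqn hratio Q hQ R hR α β hα hβ
end

section
/- Let (s_n) be a sequence of reals in [0,2] such that s_{m+n} ≤ max(s_m, s_n) for all m, n ≥ 11, and suppose the limsup s̄ of (s_n) is not attained at infinitely many indices, i.e., only finitely many n satisfy s_n ≥ s̄. Then one derives a contradiction; hence s_n ≥ s̄ for infinitely many n. -/
/-!
Past any `N ≥ 11`, max-subadditivity bounds every `s n` with `n ≥ N` by a value of `s` in the window
`[N, 2N)`: peel off `N` from `n` until it lands in the window. So the largest value of `s` on the window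
bounds the tail, hence dominates the limsup, and it is attained at an index `≥ N`.
-/

open Filter Finset

section MaxSubadditive

variable {α : Type*} {s : ℕ → α} {K N : ℕ}

theorem exists_mem_Ico_le_of_max_subadditive [LinearOrder α]
    (hsub : ∀ m n, K ≤ m → K ≤ n → s (m + n) ≤ max (s m) (s n)) (hKN : K ≤ N) (hN : 0 < N) :
    ∀ n, N ≤ n → ∃ j ∈ Ico N (2 * N), s n ≤ s j := by
  intro n
  induction n using Nat.strong_induction_on with
  | _ n ih =>
    intro hn
    by_cases hwin : n < 2 * N
    · exact ⟨n, mem_Ico.mpr ⟨hn, hwin⟩, le_rfl⟩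
    · obtain ⟨j, hj, hsj⟩ := ih (n - N) (by omega) (by omega)
      have hsplit : s n ≤ max (s N) (s (n - N)) := by
        simpa [Nat.add_sub_cancel' (by omega : N ≤ n)] using
          hsub N (n - N) hKN (by omega)
      rcases le_max_iff.mp hsplit with hle | hle
      · exact ⟨N, mem_Ico.mpr ⟨le_rfl, by omega⟩, hle⟩
      · exact ⟨j, hj, hle.trans hsj⟩

theorem exists_ge_limsup_le_of_max_subadditive [ConditionallyCompleteLinearOrder α]
    (hsub : ∀ m n, K ≤ m → K ≤ n → s (m + n) ≤ max (s m) (s n))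
    (hbdd : IsCoboundedUnder (· ≤ ·) atTop s) (hKN : K ≤ N) (hN : 0 < N) :
    ∃ j, N ≤ j ∧ limsup s atTop ≤ s j := by
  obtain ⟨j, hj, hjmax⟩ :=
    (Ico N (2 * N)).exists_max_image s ⟨N, mem_Ico.mpr ⟨le_rfl, by omega⟩⟩
  refine ⟨j, (mem_Ico.mp hj).1, limsup_le_of_le hbdd ?_⟩
  filter_upwards [eventually_ge_atTop N] with n hn
  obtain ⟨i, hi, hsi⟩ := exists_mem_Ico_le_of_max_subadditive hsub hKN hN n hn
  exact hsi.trans (hjmax i hi)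

end MaxSubadditive

/-- If `s : ℕ → ℝ` takes values in `[0,2]` and satisfies
`s (m+n) ≤ max (s m) (s n)` for all `m, n ≥ 11`, then the set of indices `n`
with `s n ≥ limsup s` is infinite. -/
theorem stmt17 (s : ℕ → ℝ) (hbd : ∀ n, s n ∈ Set.Icc (0 : ℝ) 2)
    (hsub : ∀ m n, 11 ≤ m → 11 ≤ n → s (m + n) ≤ max (s m) (s n)) :
    {n : ℕ | Filter.limsup s Filter.atTop ≤ s n}.Infinite := by
  have hbdd : IsCoboundedUnder (· ≤ ·) atTop s :=
    (isBoundedUnder_of ⟨0, fun n => (hbd n).1⟩).isCoboundedUnder_le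
  refine Nat.frequently_atTop_iff_infinite.mp (frequently_atTop.mpr fun a => ?_)
  obtain ⟨j, hj, hlim⟩ :=
    exists_ge_limsup_le_of_max_subadditive hsub hbdd (le_max_right a 11) (by omega)
  exact ⟨j, (le_max_left a 11).trans hj, hlim⟩
end
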